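/- Let A = [0,R]² be the square of side R > 0, let λ > 0, and let γ : [0,∞) → ℝ be a bounded measurable function. Then (1/|λA|²)·∫_{λA×λA} γ(‖s − t‖) ds dt = ∫_0^{√2·R} f_square(h,R)·γ(λh) dh, where λA = {λx : x ∈ A} and ‖·‖ is the Euclidean norm. -/

import Mathlib

/-!
Through the shear `(s, t) ↦ (s - t, t)` the double integral of `g (s - t)` over `A × A` becomes
the integral of `g` against the covariogram `u ↦ |A ∩ (A - u)|`. For the square `[0,a]²` the
covariogram is the product of tents `(a - |u₁|)₊ (a - |u₂|)₊`. In polar coordinates the angular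
integral of this product has period `π/2`. On `[0, π/2]` both tents are untruncated on all of
`[0, π/2]` if `r ≤ a`, on `[arccos (a/r), arcsin (a/r)]` if `a < r ≤ √2 a`, and one of them vanishes
elsewhere; an explicit primitive then shows that `r` times the angular integral is
`a⁴ f_square(r, a)`. Finally `λA` is the square of side `λR`, and the substitution `r = λh` is
absorbed by `λ f_square(λh, λR) = f_square(h, R)`.
-/

open MeasureTheory Pointwise

/-- Density of the distance between two independent uniform points in a square
of side `R`. -/
noncomputable def fsquare (h R : ℝ) : ℝ :=
  if h ≤ R then
    2 * Real.pi * h / R ^ 2 - 8 * h ^ 2 / R ^ 3 + 2 * h ^ 3 / R ^ 4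
  else
    (2 * h / R ^ 2) *
      (-2 - h ^ 2 / R ^ 2 + 3 * Real.sqrt (h ^ 2 / R ^ 2 - 1)
        + (h ^ 2 / R ^ 2 + 1) / Real.sqrt (h ^ 2 / R ^ 2 - 1)
        + 2 * Real.arcsin ((2 - h ^ 2 / R ^ 2) / (h ^ 2 / R ^ 2))
        - 4 / ((h ^ 2 / R ^ 2) *
            Real.sqrt (1 - (2 - h ^ 2 / R ^ 2) ^ 2 / (h ^ 2 / R ^ 2) ^ 2)))

/-- The square `[0,R]² ⊂ ℝ²`. -/
def squareRegion (R : ℝ) : Set (EuclideanSpace ℝ (Fin 2)) :=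
  {x | x 0 ∈ Set.Icc 0 R ∧ x 1 ∈ Set.Icc 0 R}

open Set Real

section Covariogram

variable {G : Type*} [AddGroup G] [MeasurableSpace G]

noncomputable def covariogram (μ : Measure G) (A : Set G) (u : G) : ℝ :=
  μ.real (A ∩ (u + ·) ⁻¹' A)

variable [MeasurableAdd₂ G] {μ : Measure G} [SFinite μ] {A : Set G} {g : G → ℝ} {C : ℝ}

omit [SFinite μ] in
lemma integral_indicator_prod_apply_add (hA : MeasurableSet A) (u : G) :
    ∫ t, (A ×ˢ A).indicator (fun _ => g u) (u + t, t) ∂μ = covariogram μ A u * g u := by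
  have hset : MeasurableSet (A ∩ (u + ·) ⁻¹' A) := hA.inter (measurable_const_add u hA)
  have : (fun t => (A ×ˢ A).indicator (fun _ => g u) (u + t, t))
      = (A ∩ (u + ·) ⁻¹' A).indicator (fun _ => g u) := by
    ext t
    classical
    simp only [indicator_apply, Set.mem_prod, mem_inter_iff, mem_preimage, and_comm]
  rw [this, integral_indicator hset, setIntegral_const, smul_eq_mul, covariogram]

lemma integrableOn_prod_comp_sub [MeasurableNeg G] (hμA : μ A ≠ ⊤)
    (hg : Measurable g) (hC : ∀ x, |g x| ≤ C) :
    IntegrableOn (fun z : G × G => g (z.1 - z.2)) (A ×ˢ A) (μ.prod μ) := by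
  refine Measure.integrableOn_of_bounded (M := C) ?_
    (hg.comp (measurable_fst.sub measurable_snd)).aestronglyMeasurable (ae_of_all _ fun z => hC _)
  rw [Measure.prod_prod]
  exact ENNReal.mul_ne_top hμA hμA

variable [μ.IsAddRightInvariant] [MeasurableNeg G]

lemma integral_prod_comp_sub_eq (hA : MeasurableSet A) (hg : Measurable g) :
    ∫ z in A ×ˢ A, g (z.1 - z.2) ∂(μ.prod μ)
      = ∫ z, (A ×ˢ A).indicator (fun _ => g z.1) (z.1 + z.2, z.2) ∂(μ.prod μ) := by
  have hshear := measurePreserving_add_prod μ μ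
  rw [← integral_indicator (hA.prod hA)]
  conv_lhs => rw [← hshear.map_eq]
  rw [integral_map hshear.measurable.aemeasurable ?_]
  · congr 1 with z
    by_cases hz : (z.1 + z.2, z.2) ∈ A ×ˢ A <;> simp [hz]
  · exact ((hg.comp (measurable_fst.sub measurable_snd)).indicator
      (hA.prod hA)).aestronglyMeasurable

lemma integrable_indicator_prod_apply_add (hA : MeasurableSet A) (hμA : μ A ≠ ⊤)
    (hg : Measurable g) (hC : ∀ x, |g x| ≤ C) :
    Integrable (fun z : G × G => (A ×ˢ A).indicator (fun _ => g z.1) (z.1 + z.2, z.2))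
      (μ.prod μ) := by
  have hF := (integrable_indicator_iff (hA.prod hA)).2 (integrableOn_prod_comp_sub hμA hg hC)
  refine ((measurePreserving_add_prod μ μ).integrable_comp hF.aestronglyMeasurable).2 hF
    |>.congr (ae_of_all _ fun z => ?_)
  by_cases hz : (z.1 + z.2, z.2) ∈ A ×ˢ A <;> simp [hz]

theorem integrable_covariogram_mul (hA : MeasurableSet A) (hμA : μ A ≠ ⊤)
    (hg : Measurable g) (hC : ∀ x, |g x| ≤ C) :
    Integrable (fun u => covariogram μ A u * g u) μ :=
  (integrable_indicator_prod_apply_add hA hμA hg hC).integral_prod_left.congr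
    (ae_of_all _ fun u => integral_indicator_prod_apply_add hA u)

theorem integral_integral_sub_eq_integral_covariogram_mul (hA : MeasurableSet A)
    (hμA : μ A ≠ ⊤) (hg : Measurable g) (hC : ∀ x, |g x| ≤ C) :
    ∫ s in A, ∫ t in A, g (s - t) ∂μ ∂μ = ∫ u, covariogram μ A u * g u ∂μ := by
  rw [← setIntegral_prod _ (integrableOn_prod_comp_sub hμA hg hC), integral_prod_comp_sub_eq hA hg,
    integral_prod _ (integrable_indicator_prod_apply_add hA hμA hg hC)]
  simp_rw [integral_indicator_prod_apply_add hA]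

end Covariogram

noncomputable def tent (a x : ℝ) : ℝ := max (a - |x|) 0

lemma continuous_tent (a : ℝ) : Continuous (tent a) :=
  (continuous_const.sub continuous_abs).max continuous_const

lemma tent_neg (a x : ℝ) : tent a (-x) = tent a x := by simp [tent]

lemma tent_of_abs_le {a x : ℝ} (h : |x| ≤ a) : tent a x = a - |x| :=
  max_eq_left (sub_nonneg.2 h)

lemma tent_of_le_abs {a x : ℝ} (h : a ≤ |x|) : tent a x = 0 :=
  max_eq_right (sub_nonpos.2 h)

lemma covariogram_Icc (a x : ℝ) : covariogram volume (Icc 0 a) x = tent a x := by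
  rw [covariogram, preimage_const_add_Icc, Icc_inter_Icc, Real.volume_real_Icc, tent]
  congr 1
  rcases le_total 0 x with hx | hx
  · rw [min_eq_right (by linarith), max_eq_left (by linarith), abs_of_nonneg hx]; ring
  · rw [min_eq_left (by linarith), max_eq_right (by linarith), abs_of_nonpos hx]; ring

noncomputable def planeEquivProd : EuclideanSpace ℝ (Fin 2) ≃ᵐ ℝ × ℝ :=
  (MeasurableEquiv.toLp 2 (Fin 2 → ℝ)).symm.trans (MeasurableEquiv.finTwoArrow)

lemma planeEquivProd_apply (x : EuclideanSpace ℝ (Fin 2)) : planeEquivProd x = (x 0, x 1) := rfl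

lemma measurePreserving_planeEquivProd : MeasurePreserving planeEquivProd :=
  (EuclideanSpace.volume_preserving_symm_measurableEquiv_toLp (Fin 2)).trans
    (volume_preserving_finTwoArrow ℝ)

lemma norm_eq_sqrt_sq_add_sq (x : EuclideanSpace ℝ (Fin 2)) : ‖x‖ = √(x 0 ^ 2 + x 1 ^ 2) := by
  simp [EuclideanSpace.norm_eq, Fin.sum_univ_two]

lemma squareRegion_eq_preimage (a : ℝ) :
    squareRegion a = planeEquivProd ⁻¹' (Icc 0 a ×ˢ Icc 0 a) := rfl

lemma measurableSet_squareRegion (a : ℝ) : MeasurableSet (squareRegion a) :=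
  planeEquivProd.measurable (measurableSet_Icc.prod measurableSet_Icc)

lemma volume_squareRegion (a : ℝ) :
    volume (squareRegion a) = ENNReal.ofReal a * ENNReal.ofReal a := by
  rw [squareRegion_eq_preimage, measurePreserving_planeEquivProd.measure_preimage
    (measurableSet_Icc.prod measurableSet_Icc).nullMeasurableSet, Measure.volume_eq_prod,
    Measure.prod_prod, Real.volume_Icc, sub_zero]

lemma covariogram_squareRegion (a : ℝ) (u : EuclideanSpace ℝ (Fin 2)) :
    covariogram volume (squareRegion a) u = tent a (u 0) * tent a (u 1) := by
  have : squareRegion a ∩ (u + ·) ⁻¹' squareRegion a = planeEquivProd ⁻¹'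
      ((Icc 0 a ∩ (u 0 + ·) ⁻¹' Icc 0 a) ×ˢ (Icc 0 a ∩ (u 1 + ·) ⁻¹' Icc 0 a)) := by
    ext x
    simp only [squareRegion, mem_inter_iff, mem_preimage, mem_ofPred_eq, planeEquivProd_apply,
      Set.mem_prod, PiLp.add_apply]
    tauto
  rw [covariogram, this, measurePreserving_planeEquivProd.measureReal_preimage
    ((measurableSet_Icc.inter (measurable_const_add _ measurableSet_Icc)).prod
      (measurableSet_Icc.inter (measurable_const_add _ measurableSet_Icc))).nullMeasurableSet,
    Measure.volume_eq_prod, measureReal_prod_prod, ← covariogram_Icc, ← covariogram_Icc]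
  rfl

lemma smul_squareRegion {l : ℝ} (hl : 0 < l) (R : ℝ) :
    l • squareRegion R = squareRegion (l * R) := by
  have hIcc : ∀ t : ℝ, l⁻¹ * t ∈ Icc 0 R ↔ t ∈ Icc 0 (l * R) := fun t => by
    rw [mem_Icc, mem_Icc, inv_mul_le_iff₀ hl, mul_nonneg_iff_of_pos_left (inv_pos.2 hl)]
  ext x
  simp only [mem_smul_set_iff_inv_smul_mem₀ hl.ne', squareRegion, mem_ofPred_eq, PiLp.smul_apply,
    smul_eq_mul, hIcc]

theorem MeasureTheory.Integrable.integrableOn_smul_comp_polarCoord_symm {E : Type*}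
    [NormedAddCommGroup E] [NormedSpace ℝ E] {f : ℝ × ℝ → E} (hf : Integrable f) :
    IntegrableOn (fun p : ℝ × ℝ => p.1 • f (polarCoord.symm p)) polarCoord.target := by
  have := (integrableOn_image_iff_integrableOn_abs_det_fderiv_smul volume
    polarCoord.open_target.measurableSet
    (fun p _ => (hasFDerivAt_polarCoord_symm p).hasFDerivWithinAt) polarCoord.symm.injOn f).1
    (by rw [polarCoord.symm_image_target_eq_source]; exact hf.integrableOn)
  refine this.congr_fun (fun p hp => ?_) polarCoord.open_target.measurableSet
  simp only [det_fderivPolarCoordSymm, abs_of_pos (show 0 < p.1 from hp.1)]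

theorem MeasureTheory.Integrable.integral_eq_integral_polarCoord {E : Type*}
    [NormedAddCommGroup E] [NormedSpace ℝ E] {f : ℝ × ℝ → E} (hf : Integrable f) :
    ∫ p, f p = ∫ r in Ioi 0, ∫ θ in -π..π, r • f (polarCoord.symm (r, θ)) := by
  have hint := hf.integrableOn_smul_comp_polarCoord_symm
  rw [polarCoord_target, Measure.volume_eq_prod] at hint
  rw [← integral_comp_polarCoord_symm, polarCoord_target, Measure.volume_eq_prod,
    setIntegral_prod _ hint]
  refine setIntegral_congr_fun measurableSet_Ioi fun r _ => ?_
  rw [intervalIntegral.integral_of_le (by linarith [pi_pos]), integral_Ioc_eq_integral_Ioo]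

section Angular

variable {a r : ℝ}

lemma continuous_tent_mul_tent (a r : ℝ) :
    Continuous fun θ => tent a (r * cos θ) * tent a (r * sin θ) :=
  ((continuous_tent a).comp (continuous_const.mul continuous_cos)).mul
    ((continuous_tent a).comp (continuous_const.mul continuous_sin))

lemma periodic_tent_mul_tent (a r : ℝ) :
    Function.Periodic (fun θ => tent a (r * cos θ) * tent a (r * sin θ)) (π / 2) := fun θ => by
  simp only [cos_add_pi_div_two, sin_add_pi_div_two, mul_neg, tent_neg, mul_comm]

lemma integral_tent_mul_tent_eq_four_mul (a r : ℝ) :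
    ∫ θ in -π..π, tent a (r * cos θ) * tent a (r * sin θ)
      = 4 * ∫ θ in 0..π / 2, tent a (r * cos θ) * tent a (r * sin θ) := by
  have hper := periodic_tent_mul_tent a r
  have h4 := hper.intervalIntegral_add_zsmul_eq 4 (-π)
    fun _ _ => (continuous_tent_mul_tent a r).intervalIntegrable _ _
  rw [hper.intervalIntegral_add_eq (-π) 0, zero_add,
    show -π + (4 : ℤ) • (π / 2) = π by simp only [zsmul_eq_mul]; push_cast; ring] at h4
  rw [h4, zsmul_eq_mul]
  norm_num

lemma tent_mul_tent_eq_zero (hr : √2 * a ≤ r) (θ : ℝ) :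
    tent a (r * cos θ) * tent a (r * sin θ) = 0 := by
  by_contra h
  obtain ⟨hc, hs⟩ := mul_ne_zero_iff.1 h
  have hc' : |r * cos θ| < a := lt_of_not_ge (mt tent_of_le_abs hc)
  have hs' : |r * sin θ| < a := lt_of_not_ge (mt tent_of_le_abs hs)
  have ha : 0 < a := (abs_nonneg _).trans_lt hc'
  have hr2 : (√2 * a) ^ 2 ≤ r ^ 2 := pow_le_pow_left₀ (by positivity) hr 2
  have hcos := sq_lt_sq' (neg_lt_of_abs_lt hc') (lt_of_abs_lt hc')
  have hsin := sq_lt_sq' (neg_lt_of_abs_lt hs') (lt_of_abs_lt hs')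
  rw [mul_pow, sq_sqrt zero_le_two] at hr2
  nlinarith [sin_sq_add_cos_sq θ]

lemma hasDerivAt_tent_mul_tent_primitive (a r θ : ℝ) :
    HasDerivAt (fun t => a ^ 2 * t - a * (r * sin t) + a * (r * cos t) + (r * sin t) ^ 2 / 2)
      ((a - r * cos θ) * (a - r * sin θ)) θ := by
  have hsin := (hasDerivAt_sin θ).const_mul r
  have hcos := (hasDerivAt_cos θ).const_mul r
  refine (((((hasDerivAt_id θ).const_mul (a ^ 2)).sub (hsin.const_mul a)).add
    (hcos.const_mul a)).add ((hsin.pow 2).div_const 2)).congr_deriv ?_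
  push_cast
  ring

/-- Neither tent is truncated on `[α, β]`, so the integrand is `(a - r cos θ)(a - r sin θ)`. -/
lemma integral_tent_mul_tent_of_le {α β : ℝ} (hr : 0 ≤ r) (hα : 0 ≤ α) (hαβ : α ≤ β)
    (hβ : β ≤ π / 2) (hcos : r * cos α ≤ a) (hsin : r * sin β ≤ a) :
    ∫ θ in α..β, tent a (r * cos θ) * tent a (r * sin θ)
      = (a ^ 2 * β - a * (r * sin β) + a * (r * cos β) + (r * sin β) ^ 2 / 2)
        - (a ^ 2 * α - a * (r * sin α) + a * (r * cos α) + (r * sin α) ^ 2 / 2) := by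
  have hpoly : EqOn (fun θ => tent a (r * cos θ) * tent a (r * sin θ))
      (fun θ => (a - r * cos θ) * (a - r * sin θ)) (uIcc α β) := by
    intro θ hθ
    rw [uIcc_of_le hαβ] at hθ
    have hc : 0 ≤ r * cos θ :=
      mul_nonneg hr (cos_nonneg_of_mem_Icc ⟨by linarith [hθ.1, pi_pos], by linarith [hθ.2]⟩)
    have hs : 0 ≤ r * sin θ := mul_nonneg hr (sin_nonneg_of_nonneg_of_le_pi (by linarith [hθ.1])
      (by linarith [hθ.2, pi_pos]))
    have hc' : r * cos θ ≤ a := le_trans (mul_le_mul_of_nonneg_left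
      (cos_le_cos_of_nonneg_of_le_pi hα (by linarith [hθ.2, pi_pos]) hθ.1) hr) hcos
    have hs' : r * sin θ ≤ a := le_trans (mul_le_mul_of_nonneg_left
      (sin_le_sin_of_le_of_le_pi_div_two (by linarith [hθ.1, pi_pos]) hβ hθ.2) hr) hsin
    simp only [tent_of_abs_le ((abs_of_nonneg hc).trans_le hc'),
      tent_of_abs_le ((abs_of_nonneg hs).trans_le hs'), abs_of_nonneg hc, abs_of_nonneg hs]
  rw [intervalIntegral.integral_congr hpoly, intervalIntegral.integral_eq_sub_of_hasDerivAt
    (fun θ _ => hasDerivAt_tent_mul_tent_primitive a r θ)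
    (by apply Continuous.intervalIntegrable; fun_prop)]

lemma integral_quarter_tent_mul_tent_of_le (hr : 0 ≤ r) (hra : r ≤ a) :
    ∫ θ in 0..π / 2, tent a (r * cos θ) * tent a (r * sin θ)
      = a ^ 2 * (π / 2) - 2 * a * r + r ^ 2 / 2 := by
  rw [integral_tent_mul_tent_of_le hr le_rfl (by positivity) le_rfl (by simpa using hra)
    (by simpa using hra)]
  simp only [sin_pi_div_two, cos_pi_div_two, sin_zero, cos_zero]
  ring

lemma integral_quarter_tent_mul_tent_of_lt (ha : 0 < a) (har : a < r) (hr : r ≤ √2 * a) :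
    ∫ θ in 0..π / 2, tent a (r * cos θ) * tent a (r * sin θ)
      = a ^ 2 * (2 * arcsin (a / r) - π / 2) - a ^ 2 + 2 * a * √(r ^ 2 - a ^ 2) - r ^ 2 / 2 := by
  have hr0 : 0 < r := ha.trans har
  set β := arcsin (a / r)
  set s := √(r ^ 2 - a ^ 2)
  have hs2 : s ^ 2 = r ^ 2 - a ^ 2 := sq_sqrt (by nlinarith)
  have hsinβ : r * sin β = a := by
    rw [sin_arcsin (by linarith [div_pos ha hr0]) ((div_le_one hr0).2 har.le)]
    field_simp
  have hcosβ : r * cos β = s := by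
    rw [cos_arcsin, show 1 - (a / r) ^ 2 = (s / r) ^ 2 by rw [div_pow, div_pow, hs2]; field_simp,
      sqrt_sq (by positivity)]
    field_simp
  have hβ0 : 0 ≤ β := arcsin_nonneg.2 (by positivity)
  have hβ : β ≤ π / 2 := arcsin_le_pi_div_two _
  -- `r ≤ √2 a` means `a / r ≥ sin (π / 4)`, so the window `[π/2 - β, β]` is nonempty
  have hαβ : π / 2 - β ≤ β := by
    have : π / 4 ≤ β := by
      refine (le_arcsin_iff_sin_le' ⟨by linarith [pi_pos], by linarith [pi_pos]⟩).2 ?_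
      rw [sin_pi_div_four, div_le_div_iff₀ two_pos hr0]
      nlinarith [sq_sqrt (zero_le_two : (0 : ℝ) ≤ 2), sqrt_nonneg 2]
    linarith
  have hint : ∀ x y : ℝ, IntervalIntegrable
      (fun θ => tent a (r * cos θ) * tent a (r * sin θ)) volume x y :=
    fun _ _ => (continuous_tent_mul_tent a r).intervalIntegrable _ _
  have hleft : ∫ θ in 0..π / 2 - β, tent a (r * cos θ) * tent a (r * sin θ) = 0 := by
    refine intervalIntegral.integral_zero_ae (ae_of_all _ fun θ hθ => ?_)
    rw [uIoc_of_le (by linarith)] at hθ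
    have : a ≤ r * cos θ := by
      rw [← hsinβ, ← cos_pi_div_two_sub]
      exact mul_le_mul_of_nonneg_left (cos_le_cos_of_nonneg_of_le_pi hθ.1.le
        (by linarith [pi_pos]) hθ.2) hr0.le
    rw [tent_of_le_abs (this.trans (le_abs_self _)), zero_mul]
  have hright : ∫ θ in β..π / 2, tent a (r * cos θ) * tent a (r * sin θ) = 0 := by
    refine intervalIntegral.integral_zero_ae (ae_of_all _ fun θ hθ => ?_)
    rw [uIoc_of_le hβ] at hθ
    have : a ≤ r * sin θ := by
      rw [← hsinβ]
      exact mul_le_mul_of_nonneg_left (sin_le_sin_of_le_of_le_pi_div_two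
        (by linarith [pi_pos]) hθ.2 hθ.1.le) hr0.le
    rw [tent_of_le_abs (this.trans (le_abs_self _)), mul_zero]
  rw [← intervalIntegral.integral_add_adjacent_intervals (hint 0 (π / 2 - β)) (hint _ _),
    ← intervalIntegral.integral_add_adjacent_intervals (hint (π / 2 - β) β) (hint _ _),
    hleft, hright, integral_tent_mul_tent_of_le hr0.le (by linarith) hαβ hβ
      (by rw [cos_pi_div_two_sub, hsinβ]) hsinβ.le,
    sin_pi_div_two_sub, cos_pi_div_two_sub, hsinβ, hcosβ]
  linear_combination (-1 / 2 : ℝ) * hs2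

end Angular

lemma fsquare_of_le {h R : ℝ} (hhR : h ≤ R) :
    fsquare h R = 2 * π * h / R ^ 2 - 8 * h ^ 2 / R ^ 3 + 2 * h ^ 3 / R ^ 4 :=
  if_pos hhR

lemma fsquare_of_lt {h R : ℝ} (hR : 0 < R) (hRh : R < h) :
    fsquare h R = 2 * h / R ^ 2
      * (4 * √(h ^ 2 - R ^ 2) / R + 4 * arcsin (R / h) - π - 2 - h ^ 2 / R ^ 2) := by
  have hh : 0 < h := hR.trans hRh
  set s := √(h ^ 2 - R ^ 2)
  have hs2 : s ^ 2 = h ^ 2 - R ^ 2 := sq_sqrt (by nlinarith)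
  have hs : 0 < s := sqrt_pos.2 (by nlinarith)
  have hsqrt : √(h ^ 2 / R ^ 2 - 1) = s / R := by
    rw [show h ^ 2 / R ^ 2 - 1 = (s / R) ^ 2 by rw [div_pow, hs2]; field_simp,
      sqrt_sq (by positivity)]
  have hsqrt' : √(1 - (2 - h ^ 2 / R ^ 2) ^ 2 / (h ^ 2 / R ^ 2) ^ 2) = 2 * s * R / h ^ 2 := by
    rw [show 1 - (2 - h ^ 2 / R ^ 2) ^ 2 / (h ^ 2 / R ^ 2) ^ 2 = (2 * s * R / h ^ 2) ^ 2 by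
        field_simp
        linear_combination (-4 * R ^ 2) * hs2,
      sqrt_sq (by positivity)]
  -- `(2 - b) / b = -cos (2 arcsin (R / h)) = sin (2 arcsin (R / h) - π / 2)` for `b = h² / R²`
  have harcsin : arcsin ((2 - h ^ 2 / R ^ 2) / (h ^ 2 / R ^ 2)) = 2 * arcsin (R / h) - π / 2 := by
    have hR' : R / h ≤ 1 := (div_le_one hh).2 hRh.le
    have h0 : 0 ≤ arcsin (R / h) := arcsin_nonneg.2 (by positivity)
    have h1 : arcsin (R / h) ≤ π / 2 := arcsin_le_pi_div_two _
    rw [← arcsin_sin (x := 2 * arcsin (R / h) - π / 2) (by linarith) (by linarith),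
      sin_sub_pi_div_two, cos_two_mul, cos_sq', sin_arcsin (by linarith [div_pos hR hh]) hR']
    congr 1
    field_simp
    ring
  unfold fsquare
  rw [if_neg (not_le.2 hRh), hsqrt, hsqrt', harcsin]
  field_simp
  linear_combination (-2 * R) * hs2

lemma mul_integral_tent_mul_tent {a r : ℝ} (ha : 0 < a) (hr : 0 < r) (hra : r ≤ √2 * a) :
    r * ∫ θ in -π..π, tent a (r * cos θ) * tent a (r * sin θ) = a ^ 4 * fsquare r a := by
  rw [integral_tent_mul_tent_eq_four_mul]
  rcases le_or_gt r a with hle | hlt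
  · rw [integral_quarter_tent_mul_tent_of_le hr.le hle, fsquare_of_le hle]
    field_simp
    ring
  · rw [integral_quarter_tent_mul_tent_of_lt ha hlt hra, fsquare_of_lt ha hlt]
    field_simp
    ring

lemma fsquare_mul_mul {l : ℝ} (hl : 0 < l) (h R : ℝ) :
    l * fsquare (l * h) (l * R) = fsquare h R := by
  have hratio : (l * h) ^ 2 / (l * R) ^ 2 = h ^ 2 / R ^ 2 := by
    rw [mul_pow, mul_pow, mul_div_mul_left _ _ (by positivity)]
  unfold fsquare
  rw [hratio]
  by_cases hhR : h ≤ R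
  · rw [if_pos hhR, if_pos (mul_le_mul_of_nonneg_left hhR hl.le)]
    field_simp
  · rw [if_neg hhR, if_neg fun h' => hhR (le_of_mul_le_mul_left h' hl), ← mul_assoc]
    congr 1
    field_simp

lemma volume_squareRegion_ne_top (a : ℝ) : volume (squareRegion a) ≠ ⊤ := by
  rw [volume_squareRegion]
  exact ENNReal.mul_ne_top ENNReal.ofReal_ne_top ENNReal.ofReal_ne_top

lemma covariogram_squareRegion_mul (a : ℝ) (γ : ℝ → ℝ) (u : EuclideanSpace ℝ (Fin 2)) :
    covariogram volume (squareRegion a) u * γ ‖u‖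
      = tent a (u 0) * tent a (u 1) * γ √(u 0 ^ 2 + u 1 ^ 2) := by
  rw [covariogram_squareRegion, norm_eq_sqrt_sq_add_sq]

section SquareKernel

variable {a : ℝ} {γ : ℝ → ℝ} {M : ℝ}

lemma integrable_tent_mul_tent_mul (hγ : Measurable γ) (hM : ∀ h : ℝ, 0 ≤ h → |γ h| ≤ M) :
    Integrable fun p : ℝ × ℝ => tent a p.1 * tent a p.2 * γ √(p.1 ^ 2 + p.2 ^ 2) := by
  have := integrable_covariogram_mul (g := fun x => γ ‖x‖) (measurableSet_squareRegion a)
    (volume_squareRegion_ne_top a) (hγ.comp measurable_norm) fun x => hM _ (norm_nonneg x)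
  simp_rw [covariogram_squareRegion_mul] at this
  exact (measurePreserving_planeEquivProd.integrable_comp_emb
    planeEquivProd.measurableEmbedding).1 this

lemma integral_integral_squareRegion_eq_integral_prod (hγ : Measurable γ)
    (hM : ∀ h : ℝ, 0 ≤ h → |γ h| ≤ M) :
    ∫ s in squareRegion a, ∫ t in squareRegion a, γ ‖s - t‖
      = ∫ p : ℝ × ℝ, tent a p.1 * tent a p.2 * γ √(p.1 ^ 2 + p.2 ^ 2) := by
  rw [integral_integral_sub_eq_integral_covariogram_mul (g := fun x => γ ‖x‖)
    (measurableSet_squareRegion a) (volume_squareRegion_ne_top a) (hγ.comp measurable_norm)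
    fun x => hM _ (norm_nonneg x)]
  simp_rw [covariogram_squareRegion_mul]
  exact measurePreserving_planeEquivProd.integral_comp'
    fun p : ℝ × ℝ => tent a p.1 * tent a p.2 * γ √(p.1 ^ 2 + p.2 ^ 2)

lemma integral_tent_mul_tent_mul (ha : 0 < a)
    (hf : Integrable fun p : ℝ × ℝ => tent a p.1 * tent a p.2 * γ √(p.1 ^ 2 + p.2 ^ 2)) :
    ∫ p : ℝ × ℝ, tent a p.1 * tent a p.2 * γ √(p.1 ^ 2 + p.2 ^ 2)
      = a ^ 4 * ∫ r in 0..√2 * a, fsquare r a * γ r := by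
  calc ∫ p : ℝ × ℝ, tent a p.1 * tent a p.2 * γ √(p.1 ^ 2 + p.2 ^ 2)
      = ∫ r in Ioi 0, γ r * (r * ∫ θ in -π..π, tent a (r * cos θ) * tent a (r * sin θ)) := by
        rw [hf.integral_eq_integral_polarCoord]
        refine setIntegral_congr_fun measurableSet_Ioi fun r hr => ?_
        have hradius : ∀ θ, √((r * cos θ) ^ 2 + (r * sin θ) ^ 2) = r := fun θ => by
          rw [show (r * cos θ) ^ 2 + (r * sin θ) ^ 2 = r ^ 2 by
            linear_combination r ^ 2 * sin_sq_add_cos_sq θ, sqrt_sq (le_of_lt hr)]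
        simp only [polarCoord_symm_apply, smul_eq_mul, hradius, ← intervalIntegral.integral_const_mul]
        congr with θ
        ring
    _ = ∫ r in Ioc 0 (√2 * a),
          γ r * (r * ∫ θ in -π..π, tent a (r * cos θ) * tent a (r * sin θ)) := by
      refine setIntegral_eq_of_subset_of_forall_sdiff_eq_zero measurableSet_Ioi Ioc_subset_Ioi_self
        fun r hr => ?_
      have hr' : √2 * a ≤ r := le_of_lt (not_le.1 fun h => hr.2 ⟨hr.1, h⟩)
      simp only [tent_mul_tent_eq_zero hr', intervalIntegral.integral_zero, mul_zero]
    _ = ∫ r in Ioc 0 (√2 * a), a ^ 4 * (fsquare r a * γ r) :=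
      setIntegral_congr_fun measurableSet_Ioc fun r hr => by
        rw [mul_integral_tent_mul_tent ha hr.1 hr.2]
        ring
    _ = a ^ 4 * ∫ r in 0..√2 * a, fsquare r a * γ r := by
      rw [integral_const_mul, intervalIntegral.integral_of_le (by positivity)]

theorem integral_integral_squareRegion (ha : 0 < a) (hγ : Measurable γ)
    (hM : ∀ h : ℝ, 0 ≤ h → |γ h| ≤ M) :
    ∫ s in squareRegion a, ∫ t in squareRegion a, γ ‖s - t‖
      = a ^ 4 * ∫ r in 0..√2 * a, fsquare r a * γ r := by
  rw [integral_integral_squareRegion_eq_integral_prod hγ hM,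
    integral_tent_mul_tent_mul ha (integrable_tent_mul_tent_mul hγ hM)]

end SquareKernel

/-- Scaling identity: for the square `A = [0,R]²`, `λ > 0` and a bounded measurable `γ`,
the normalized double integral of `γ(‖s - t‖)` over `λA × λA` equals
`∫_0^{√2 R} fsquare(h,R) γ(λh) dh`. -/
theorem stmt_10 (R l : ℝ) (hR : 0 < R) (hl : 0 < l) (γ : ℝ → ℝ)
    (hmeas : Measurable γ) (hbdd : ∃ M, ∀ h : ℝ, 0 ≤ h → |γ h| ≤ M) :
    ((volume (l • squareRegion R)).toReal ^ 2)⁻¹ *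
        (∫ s in l • squareRegion R, ∫ t in l • squareRegion R, γ ‖s - t‖)
      = ∫ h in Set.Icc 0 (Real.sqrt 2 * R), fsquare h R * γ (l * h) := by
  obtain ⟨M, hM⟩ := hbdd
  have ha : 0 < l * R := mul_pos hl hR
  have hrescale : ∫ h in 0..√2 * R, fsquare h R * γ (l * h)
      = l * ∫ h in 0..√2 * R, fsquare (l * h) (l * R) * γ (l * h) := by
    simp_rw [← intervalIntegral.integral_const_mul, ← mul_assoc, fsquare_mul_mul hl]
  rw [smul_squareRegion hl, integral_integral_squareRegion ha hmeas hM, volume_squareRegion,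
    ENNReal.toReal_mul, ENNReal.toReal_ofReal ha.le, integral_Icc_eq_integral_Ioc,
    ← intervalIntegral.integral_of_le (by positivity), hrescale,
    intervalIntegral.integral_comp_mul_left (fun x => fsquare x (l * R) * γ x) hl.ne', mul_zero,
    smul_eq_mul, show l * (√2 * R) = √2 * (l * R) by ring]
  field_simp
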